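/- arXiv:2307.10202 — 2 statements merged into one kernel-verified Lean document; each statement's English description precedes it below -/
import Mathlib

section
/- Let α : (F, φ) → (G, ψ) be a morphism of representation graphs for a finitely bi-separated graph Ė (i.e., α : F → G is a graph homomorphism with ψ ∘ α = φ). Then for every vertex u of F, φ(Walk_u(F)) = ψ(Walk_{α(u)}(G)). -/
/-- A directed graph: vertices, edges, source and range maps. -/
structure DGraph where
  V : Type
  E : Type
  s : E → V
  r : E → V

/-- A homomorphism of directed graphs. -/
structure GraphHom (F E : DGraph) where
  v : F.V → E.V
  e : F.E → E.E
  hs : ∀ f, E.s (e f) = v (F.s f)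
  hr : ∀ f, E.r (e f) = v (F.r f)

def GraphHom.id (F : DGraph) : GraphHom F F where
  v := fun x => x
  e := fun x => x
  hs := fun _ => rfl
  hr := fun _ => rfl

def GraphHom.comp {F G E : DGraph} (ψ : GraphHom G E) (α : GraphHom F G) :
    GraphHom F E where
  v := ψ.v ∘ α.v
  e := ψ.e ∘ α.e
  hs f := by simp [Function.comp, ψ.hs, α.hs]
  hr f := by simp [Function.comp, ψ.hr, α.hr]

/-- Edges of the double graph: `inl e` is `e`, `inr e` is the reversed edge `e*`. -/
abbrev DE (G : DGraph) := G.E ⊕ G.E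

/-- Source of an edge of the double graph. -/
def DGraph.ds (G : DGraph) : DE G → G.V := Sum.elim G.s G.r

/-- Range of an edge of the double graph. -/
def DGraph.dr (G : DGraph) : DE G → G.V := Sum.elim G.r G.s

/-- `IsWalk G u l v` : the list `l` of double-graph edges is a walk from `u` to `v`. -/
def IsWalk (G : DGraph) : G.V → List (DE G) → G.V → Prop
  | u, [], v => u = v
  | u, x :: l, v => G.ds x = u ∧ IsWalk G (G.dr x) l v

/-- A graph is connected if any two vertices are joined by a walk. -/
def DGraph.Connected (G : DGraph) : Prop := ∀ u v : G.V, ∃ l, IsWalk G u l v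

/-- A graph homomorphism is a covering if it is bijective on the sets of edges
with a given source (resp. a given range). -/
def IsCovering {F E : DGraph} (φ : GraphHom F E) : Prop :=
  (∀ w : F.V, Set.BijOn φ.e {f | F.s f = w} {g | E.s g = φ.v w}) ∧
  (∀ w : F.V, Set.BijOn φ.e {f | F.r f = w} {g | E.r g = φ.v w})

/-- The reversal involution on double-graph edges. -/
def DGraph.bar (G : DGraph) : DE G → DE G := Sum.swap

/-- Action of a graph homomorphism on double-graph edges. -/
def mapD {F E : DGraph} (φ : GraphHom F E) : DE F → DE E := Sum.map φ.e φ.e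

/-- A walk is reduced if it contains no spur `e e*` or `e* e`. -/
def Reduced {G : DGraph} (l : List (DE G)) : Prop :=
  List.Chain' (fun x y => y ≠ G.bar x) l

open scoped Classical in
/-- The reduction of a walk, deleting spurs until none remain. -/
noncomputable def red {G : DGraph} : List (DE G) → List (DE G)
  | [] => []
  | x :: l =>
    match red l with
    | [] => [x]
    | y :: l' => if y = G.bar x then l' else x :: y :: l'

/-- A graph is a tree if between any two vertices there is exactly one reduced walk. -/
def DGraph.IsTree (G : DGraph) : Prop :=
  ∀ u v : G.V, ∃! l : List (DE G), IsWalk G u l v ∧ Reduced l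

/-- A covering is universal if it maps onto every (connected) covering. -/
def IsUniversal {F E : DGraph} (φ : GraphHom F E) : Prop :=
  ∀ (G : DGraph) (ψ : GraphHom G E), G.Connected → IsCovering ψ →
    ∃ α : GraphHom F G, ψ.comp α = φ

/-- A (finitely) bi-separated graph `Ed = (E, C, D)`: a directed graph `E` together with
partitions `C_v` of `s⁻¹(v)` and `D_v` of `r⁻¹(v)` into finite nonempty blocks, such
that any block of `C` meets any block of `D` in at most one edge. -/
structure BisepGraph where
  G : DGraph
  C : Set (Set G.E)
  D : Set (Set G.E)
  hCne : ∀ X ∈ C, X.Nonempty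
  hDne : ∀ Y ∈ D, Y.Nonempty
  hCs : ∀ X ∈ C, ∀ e ∈ X, ∀ f ∈ X, G.s e = G.s f
  hDr : ∀ Y ∈ D, ∀ e ∈ Y, ∀ f ∈ Y, G.r e = G.r f
  hCpart : ∀ e : G.E, ∃! X, X ∈ C ∧ e ∈ X
  hDpart : ∀ e : G.E, ∃! Y, Y ∈ D ∧ e ∈ Y
  hCfin : ∀ X ∈ C, X.Finite
  hDfin : ∀ Y ∈ D, Y.Finite
  hCD : ∀ X ∈ C, ∀ Y ∈ D, Set.Subsingleton (X ∩ Y)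

/-- A representation graph `(F, φ)` for the bi-separated graph `Ed`: for every vertex
`w` of `F` and every block `X ∈ C` (resp. `Y ∈ D`) based at `φ(w)` there is exactly
one edge of `F` with source (resp. range) `w` whose `φ`-image lies in `X` (resp. `Y`). -/
def IsRepGraph (Ed : BisepGraph) (F : DGraph) (φ : GraphHom F Ed.G) : Prop :=
  (∀ w : F.V, ∀ X ∈ Ed.C, (∀ e ∈ X, Ed.G.s e = φ.v w) →
      ∃! f : F.E, F.s f = w ∧ φ.e f ∈ X) ∧
  (∀ w : F.V, ∀ Y ∈ Ed.D, (∀ e ∈ Y, Ed.G.r e = φ.v w) →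
      ∃! f : F.E, F.r f = w ∧ φ.e f ∈ Y)

/-- The image `φ(Walk_u(F))` of the set of walks of `F` starting at `u`: a walk of `E`
is recorded as a pair (starting vertex, list of double-graph edges). -/
def WalkImg {F E : DGraph} (φ : GraphHom F E) (u : F.V) : Set (E.V × List (DE E)) :=
  {pm | ∃ l v, IsWalk F u l v ∧ pm = (φ.v u, List.map (mapD φ) l)}

/-- A representation graph is irreducible if distinct vertices have distinct
images of based walk sets. -/
def IrreducibleRep {F E : DGraph} (φ : GraphHom F E) : Prop :=
  ∀ u v : F.V, u ≠ v → WalkImg φ u ≠ WalkImg φ v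

/-! A morphism `α` of representation graphs lifts edges uniquely: at a vertex `w` of `F`, the
edge of `G` at `α w` lying over a block `X` of `C` (or `D`) is the `α`-image of the edge of `F`
at `w` lying over `X`, which exists because `F` is a representation graph and is sent there
because `G` has only one such edge. Hence every walk of `G` from `α u` lifts to a walk of `F`
from `u` with the same image in `Ed`, while conversely `α` maps walks of `F` to walks of `G`. -/

lemma GraphHom.ds_mapD {F E : DGraph} (φ : GraphHom F E) (x : DE F) :
    E.ds (mapD φ x) = φ.v (F.ds x) := by
  cases x <;> simp [DGraph.ds, mapD, φ.hs, φ.hr]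

lemma GraphHom.dr_mapD {F E : DGraph} (φ : GraphHom F E) (x : DE F) :
    E.dr (mapD φ x) = φ.v (F.dr x) := by
  cases x <;> simp [DGraph.dr, mapD, φ.hs, φ.hr]

lemma mapD_comp {F G E : DGraph} (ψ : GraphHom G E) (α : GraphHom F G) :
    mapD (ψ.comp α) = mapD ψ ∘ mapD α := by
  funext x
  cases x <;> rfl

lemma IsWalk.map {F E : DGraph} (φ : GraphHom F E) :
    ∀ {l : List (DE F)} {u v : F.V}, IsWalk F u l v →
      IsWalk E (φ.v u) (l.map (mapD φ)) (φ.v v)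
  | [], _, _, h => congrArg φ.v h
  | _ :: _, _, _, h => ⟨by rw [φ.ds_mapD, h.1], by rw [φ.dr_mapD]; exact h.2.map φ⟩

lemma walkImg_comp_subset {F G E : DGraph} (ψ : GraphHom G E) (α : GraphHom F G) (u : F.V) :
    WalkImg (ψ.comp α) u ⊆ WalkImg ψ (α.v u) := by
  rintro _ ⟨l, v, hl, rfl⟩
  exact ⟨l.map (mapD α), α.v v, hl.map α, by rw [mapD_comp, List.map_map]; rfl⟩

namespace IsRepGraph

variable {Ed : BisepGraph} {F G : DGraph} {ψ : GraphHom G Ed.G} {α : GraphHom F G}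

lemma exists_lift_of_s_eq (hF : IsRepGraph Ed F (ψ.comp α)) (hG : IsRepGraph Ed G ψ)
    {w : F.V} {g : G.E} (hg : G.s g = α.v w) : ∃ f, F.s f = w ∧ α.e f = g := by
  obtain ⟨X, ⟨hXC, hgX⟩, -⟩ := Ed.hCpart (ψ.e g)
  have hXw : ∀ e ∈ X, Ed.G.s e = ψ.v (α.v w) := fun e he => by
    rw [Ed.hCs X hXC e he _ hgX, ψ.hs, hg]
  obtain ⟨f, ⟨hfs, hfX⟩, -⟩ := hF.1 w X hXC hXw
  exact ⟨f, hfs, (hG.1 (α.v w) X hXC hXw).unique ⟨by rw [α.hs, hfs], hfX⟩ ⟨hg, hgX⟩⟩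

lemma exists_lift_of_r_eq (hF : IsRepGraph Ed F (ψ.comp α)) (hG : IsRepGraph Ed G ψ)
    {w : F.V} {g : G.E} (hg : G.r g = α.v w) : ∃ f, F.r f = w ∧ α.e f = g := by
  obtain ⟨Y, ⟨hYD, hgY⟩, -⟩ := Ed.hDpart (ψ.e g)
  have hYw : ∀ e ∈ Y, Ed.G.r e = ψ.v (α.v w) := fun e he => by
    rw [Ed.hDr Y hYD e he _ hgY, ψ.hr, hg]
  obtain ⟨f, ⟨hfr, hfY⟩, -⟩ := hF.2 w Y hYD hYw
  exact ⟨f, hfr, (hG.2 (α.v w) Y hYD hYw).unique ⟨by rw [α.hr, hfr], hfY⟩ ⟨hg, hgY⟩⟩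

lemma exists_dlift (hF : IsRepGraph Ed F (ψ.comp α)) (hG : IsRepGraph Ed G ψ)
    {w : F.V} {d : DE G} (hd : G.ds d = α.v w) : ∃ x, F.ds x = w ∧ mapD α x = d := by
  cases d with
  | inl g =>
    obtain ⟨f, hf, rfl⟩ := exists_lift_of_s_eq hF hG hd
    exact ⟨.inl f, hf, rfl⟩
  | inr g =>
    obtain ⟨f, hf, rfl⟩ := exists_lift_of_r_eq hF hG hd
    exact ⟨.inr f, hf, rfl⟩

lemma exists_walk_lift (hF : IsRepGraph Ed F (ψ.comp α)) (hG : IsRepGraph Ed G ψ) :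
    ∀ {l : List (DE G)} {w : F.V} {x : G.V}, IsWalk G (α.v w) l x →
      ∃ l' v, IsWalk F w l' v ∧ l'.map (mapD α) = l
  | [], w, _, _ => ⟨[], w, rfl, rfl⟩
  | _ :: _, _, _, hl => by
    obtain ⟨y, hy, rfl⟩ := exists_dlift hF hG hl.1
    obtain ⟨l', v, hl', rfl⟩ := exists_walk_lift hF hG (α.dr_mapD y ▸ hl.2)
    exact ⟨y :: l', v, ⟨hy, hl'⟩, rfl⟩

lemma walkImg_subset_comp (hF : IsRepGraph Ed F (ψ.comp α)) (hG : IsRepGraph Ed G ψ)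
    (u : F.V) : WalkImg ψ (α.v u) ⊆ WalkImg (ψ.comp α) u := by
  rintro _ ⟨l, x, hl, rfl⟩
  obtain ⟨l', v, hl', rfl⟩ := exists_walk_lift hF hG hl
  exact ⟨l', v, hl', by rw [mapD_comp, List.map_map]; rfl⟩

end IsRepGraph

/-- Lemma 3.10: a morphism `α : (F,φ) → (G,ψ)` of representation graphs satisfies
`φ(Walk_u(F)) = ψ(Walk_{α(u)}(G))` for every vertex `u` of `F`. -/
theorem stmt_6 (Ed : BisepGraph) (F G : DGraph)
    (φ : GraphHom F Ed.G) (ψ : GraphHom G Ed.G)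
    (hF : IsRepGraph Ed F φ) (hG : IsRepGraph Ed G ψ)
    (α : GraphHom F G) (hcomm : ψ.comp α = φ) (u : F.V) :
    WalkImg φ u = WalkImg ψ (α.v u) := by
  subst hcomm
  exact (walkImg_comp_subset ψ α u).antisymm (hF.walkImg_subset_comp hG u)
end

section
/- Let (T, η) be a covering of a connected graph S where T is a tree, let x be a vertex of T, and let p, q be walks in T starting at x. Then r(p) = r(q) if and only if the reductions of η(p) and η(q) are equal. -/
/-! In a tree, the reduction of a walk from `x` is the unique reduced walk from `x` to its
range, so walks with equal ranges have equal reductions. Conversely, a covering is injective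
on the edges leaving each vertex of the double graph; hence it commutes with reduction and is
injective on walks with a common source (unique path lifting). Equal reduced images therefore
come from equal reductions in `T`, which have equal ranges. -/

namespace DGraph

variable {G : DGraph}

lemma ds_bar (x : DE G) : G.ds (G.bar x) = G.dr x := by cases x <;> rfl

lemma dr_bar (x : DE G) : G.dr (G.bar x) = G.ds x := by cases x <;> rfl

end DGraph

section Reduction

variable {G : DGraph}

lemma IsWalk.range_eq {u v v' : G.V} {l : List (DE G)}
    (h : IsWalk G u l v) (h' : IsWalk G u l v') : v = v' := by
  induction l generalizing u with
  | nil => exact h.symm.trans h'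
  | cons x l ih => exact ih h.2 h'.2

lemma IsWalk.red {u v : G.V} {l : List (DE G)} (h : IsWalk G u l v) :
    IsWalk G u (red l) v := by
  induction l generalizing u with
  | nil => exact h
  | cons x l ih =>
    obtain ⟨hx, hl⟩ := h
    have hr := ih hl
    rw [_root_.red]
    rcases hred : _root_.red l with _ | ⟨y, l'⟩
    · rw [hred] at hr
      exact ⟨hx, hr⟩
    · rw [hred] at hr
      dsimp only
      split_ifs with hy
      · rw [hy] at hr
        simpa only [DGraph.dr_bar, hx] using hr.2
      · exact ⟨hx, hr⟩

lemma reduced_red (l : List (DE G)) : Reduced (red l) := by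
  induction l with
  | nil => exact List.isChain_nil
  | cons x l ih =>
    rw [red]
    rcases hred : red l with _ | ⟨y, l'⟩
    · exact List.isChain_singleton _
    · rw [hred] at ih
      dsimp only
      split_ifs with hy
      · exact ih.tail
      · exact List.isChain_cons_cons.2 ⟨hy, ih⟩

lemma DGraph.IsTree.red_eq_red (htree : G.IsTree) {u v : G.V} {l l' : List (DE G)}
    (h : IsWalk G u l v) (h' : IsWalk G u l' v) : red l = red l' := by
  obtain ⟨_, -, huniq⟩ := htree u v
  exact (huniq _ ⟨h.red, reduced_red l⟩).trans (huniq _ ⟨h'.red, reduced_red l'⟩).symm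

end Reduction

section Covering

variable {F E : DGraph} {φ : GraphHom F E}

lemma mapD_bar (x : DE F) : mapD φ (F.bar x) = E.bar (mapD φ x) := by
  cases x <;> rfl

lemma IsCovering.eq_of_mapD_eq (hcov : IsCovering φ) {y y' : DE F}
    (hs : F.ds y = F.ds y') (h : mapD φ y = mapD φ y') : y = y' := by
  rcases y with e | e <;> rcases y' with e' | e' <;> simp only [mapD, Sum.map_inl,
    Sum.map_inr, Sum.inl.injEq, Sum.inr.injEq, reduceCtorEq] at h ⊢
  · exact (hcov.1 (F.s e)).injOn rfl hs.symm h
  · exact (hcov.2 (F.r e)).injOn rfl hs.symm h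

lemma IsCovering.eq_of_map_eq (hcov : IsCovering φ) {u v v' : F.V} {l l' : List (DE F)}
    (h : IsWalk F u l v) (h' : IsWalk F u l' v')
    (heq : List.map (mapD φ) l = List.map (mapD φ) l') : l = l' := by
  induction l generalizing u l' with
  | nil => simpa using heq.symm
  | cons x l ih =>
    rcases l' with _ | ⟨x', l'⟩
    · simp at heq
    · rw [List.map_cons, List.map_cons, List.cons.injEq] at heq
      obtain rfl : x = x' := hcov.eq_of_mapD_eq (h.1.trans h'.1.symm) heq.1
      rw [ih h.2 h'.2 heq.2]

lemma IsCovering.red_map (hcov : IsCovering φ) {u v : F.V} {l : List (DE F)}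
    (h : IsWalk F u l v) : red (List.map (mapD φ) l) = List.map (mapD φ) (red l) := by
  induction l generalizing u with
  | nil => rfl
  | cons x l ih =>
    rw [List.map_cons, red, red, ih h.2]
    have hrw := h.2.red
    rcases hred : red l with _ | ⟨y, l'⟩
    · rfl
    · rw [hred] at hrw
      have hbar : mapD φ y = E.bar (mapD φ x) ↔ y = F.bar x := by
        rw [← mapD_bar]
        exact ⟨hcov.eq_of_mapD_eq (hrw.1.trans (F.ds_bar x).symm), congrArg _⟩
      simp only [List.map_cons]
      by_cases hy : y = F.bar x
      · rw [if_pos (hbar.2 hy), if_pos hy]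
      · rw [if_neg (mt hbar.1 hy), if_neg hy, List.map_cons, List.map_cons]

end Covering

theorem stmt_16_general {T S : DGraph}
    (η : GraphHom T S) (hcov : IsCovering η) (htree : T.IsTree)
    (x : T.V) (lp lq : List (DE T)) (vp vq : T.V)
    (hp : IsWalk T x lp vp) (hq : IsWalk T x lq vq) :
    vp = vq ↔ red (List.map (mapD η) lp) = red (List.map (mapD η) lq) := by
  rw [hcov.red_map hp, hcov.red_map hq]
  constructor
  · rintro rfl
    rw [htree.red_eq_red hp hq]
  · intro h
    have hred : red lp = red lq := hcov.eq_of_map_eq hp.red hq.red h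
    exact (hred ▸ hp.red).range_eq hq.red

/-- Lemma 5.1: for a covering `(T, η)` of a connected graph `S` with `T` a tree and
walks `p, q` in `T` starting at the same vertex `x`, the walks have the same range
iff the reductions of their images under `η` coincide. -/
theorem stmt_16 {T S : DGraph} (hT : T.Connected) (hS : S.Connected)
    (η : GraphHom T S) (hcov : IsCovering η) (htree : T.IsTree)
    (x : T.V) (lp lq : List (DE T)) (vp vq : T.V)
    (hp : IsWalk T x lp vp) (hq : IsWalk T x lq vq) :
    vp = vq ↔ red (List.map (mapD η) lp) = red (List.map (mapD η) lq) :=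
  stmt_16_general η hcov htree x lp lq vp vq hp hq
end
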